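/- Let B be a field of characteristic not 2, b an invertible n×n scalar matrix over B, and C = B[y, jor(y)^{-1}]/(y^2 − b), where y is an n×n matrix of indeterminates and jor(y) is the determinant of the Jordan multiplication z ↦ (zy+yz)/2. Then C has dimension 2 as a B-vector space. -/

import Mathlib

open MvPolynomial

noncomputable section

/-- `jor half b` : the determinant of the linear map `z ↦ half • (z*b + b*z)`
(Jordan multiplication by `b`, when `half` is the inverse of `2`). -/
def jor {n : ℕ} {B : Type} [CommRing B] (half : B)
    (b : Matrix (Fin n) (Fin n) B) : B :=
  LinearMap.det (half • (LinearMap.mulLeft B b + LinearMap.mulRight B b))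

/-- The generic `n × n` matrix `y` of indeterminates. -/
def Ymat (B : Type) [CommRing B] (n : ℕ) :
    Matrix (Fin n) (Fin n) (MvPolynomial (Fin n × Fin n) B) :=
  Matrix.of fun i j => X (i, j)

/-- `jor(y)` for the generic matrix of indeterminates. -/
def jorY (B : Type) [CommRing B] (half : B) (n : ℕ) : MvPolynomial (Fin n × Fin n) B :=
  jor (C half) (Ymat B n)

/-- `B[y, jor(y)⁻¹]`. -/
abbrev Caway (B : Type) [CommRing B] (half : B) (n : ℕ) :=
  Localization.Away (jorY B half n)

/-- The ideal of `B[y, jor(y)⁻¹]` generated by the entries of `y² − b`. -/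
def relIdeal (B : Type) [CommRing B] (half : B) (n : ℕ)
    (b : Matrix (Fin n) (Fin n) B) : Ideal (Caway B half n) :=
  Ideal.span (Set.range fun ij : Fin n × Fin n =>
    (((Ymat B n).map (algebraMap (MvPolynomial (Fin n × Fin n) B) (Caway B half n))) ^ 2
      - b.map (algebraMap B (Caway B half n))) ij.1 ij.2)

/-- `C = B[y, jor(y)⁻¹]/(y² − b)`. -/
abbrev Cquot (B : Type) [CommRing B] (half : B) (n : ℕ)
    (b : Matrix (Fin n) (Fin n) B) :=
  Caway B half n ⧸ relIdeal B half n b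

/-!
If `y²` is central, the Jordan map `z ↦ (z y + y z) / 2` sends the commutator `z y - y z` to
`(z y² - y² z) / 2 = 0`. In `C` the generic matrix squares to the scalar `λ` and its Jordan map is
invertible, so it commutes with every matrix and is a scalar `t` with `t² = λ`. Conversely, in
`B[X]/(X² - λ)` the scalar matrix `X` squares to `λ`, and its Jordan map is multiplication by `X`,
a unit since `λ` is. The two universal properties give inverse isomorphisms `t ↔ X`, so
`dim C = deg (X² - λ) = 2`.
-/

lemma Matrix.map_smul_one {m R S F : Type*} [DecidableEq m] [Semiring R] [Semiring S]
    [FunLike F R S] [RingHomClass F R S] (f : F) (c : R) :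
    (c • (1 : Matrix m m R)).map f = f c • 1 := by
  ext i j
  simp [Matrix.one_apply, apply_ite f]

lemma Matrix.stdBasis_repr_apply {m p R : Type*} [Fintype m] [Fintype p] [Semiring R]
    (y : Matrix m p R) (ij : m × p) :
    (Matrix.stdBasis R m p).repr y ij = y ij.1 ij.2 := by
  simp [Matrix.stdBasis]

section Jordan

variable {n : ℕ} {R S : Type} [CommRing R] [CommRing S]

lemma jor_map (φ : R →+* S) (h : R) (y : Matrix (Fin n) (Fin n) R) :
    φ (jor h y) = jor (φ h) (y.map φ) := by
  classical
  rw [jor, jor, ← LinearMap.det_toMatrix (Matrix.stdBasis R _ _),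
    ← LinearMap.det_toMatrix (Matrix.stdBasis S _ _), RingHom.map_det]
  congr 1
  ext ⟨i, j⟩ ⟨k, l⟩
  simp only [RingHom.mapMatrix_apply, Matrix.map_apply, LinearMap.toMatrix_apply,
    Matrix.stdBasis_eq_single, LinearMap.smul_apply, LinearMap.add_apply,
    LinearMap.mulLeft_apply, LinearMap.mulRight_apply, Matrix.stdBasis_repr_apply]
  simp [Matrix.mul_apply, Matrix.single, apply_ite φ]

lemma isUnit_jor_smul_one (h r : S) (hr : IsUnit (h * 2 * r)) :
    IsUnit (jor h (r • (1 : Matrix (Fin n) (Fin n) S))) := by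
  have : h • (LinearMap.mulLeft S (r • (1 : Matrix (Fin n) (Fin n) S)) +
      LinearMap.mulRight S (r • 1)) = algebraMap S _ (h * 2 * r) := by
    ext z : 1
    simp only [LinearMap.smul_apply, LinearMap.add_apply, LinearMap.mulLeft_apply,
      LinearMap.mulRight_apply, Module.algebraMap_end_apply, smul_mul_assoc, mul_smul_comm,
      one_mul, mul_one, ← add_smul, smul_smul]
    ring_nf
  rw [jor, this]
  exact (hr.map _).map _

lemma commute_of_isUnit_jor (h : S) (y : Matrix (Fin n) (Fin n) S)
    (hy : ∀ z, Commute z (y ^ 2)) (hjor : IsUnit (jor h y)) (z : Matrix (Fin n) (Fin n) S) :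
    Commute z y := by
  have hbij := (Module.End.isUnit_iff _).mp ((LinearMap.isUnit_iff_isUnit_det _).mpr hjor)
  refine sub_eq_zero.mp (hbij.injective ?_)
  simp only [LinearMap.smul_apply, LinearMap.add_apply, LinearMap.mulLeft_apply,
    LinearMap.mulRight_apply, map_zero]
  rw [← smul_zero h]
  congr 1
  have := (hy z).eq
  simp only [sq, mul_sub, sub_mul, ← mul_assoc] at this ⊢
  rw [this]
  abel

lemma exists_eq_smul_one_of_isUnit_jor (hn : 0 < n) (h c : S) (y : Matrix (Fin n) (Fin n) S)
    (hy : y ^ 2 = c • 1) (hjor : IsUnit (jor h y)) :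
    ∃ t, t ^ 2 = c ∧ y = t • 1 := by
  have hcomm : ∀ z, Commute z y :=
    commute_of_isUnit_jor h y (fun z => hy ▸ (Commute.one_right z).smul_right c) hjor
  obtain ⟨t, ht⟩ := Matrix.mem_range_scalar_iff_commute_single'.mpr fun i j => hcomm _
  have hyt : y = t • 1 := by rw [← ht, Matrix.scalar_apply, Matrix.smul_one_eq_diagonal]
  refine ⟨t, ?_, hyt⟩
  simpa [hyt, smul_pow] using congrFun (congrFun hy ⟨0, hn⟩) ⟨0, hn⟩

end Jordan

section GenericMatrix

variable {B : Type} [CommRing B] {half : B} {n : ℕ} {S : Type} [CommRing S] [Algebra B S]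

lemma Ymat_map_aeval (z : Matrix (Fin n) (Fin n) S) :
    (Ymat B n).map (aeval fun ij : Fin n × Fin n => z ij.1 ij.2) = z := by
  ext i j
  simp [Ymat]

lemma AlgHom.map_jorY (φ : MvPolynomial (Fin n × Fin n) B →ₐ[B] S) :
    φ (jorY B half n) = jor (algebraMap B S half) ((Ymat B n).map φ) := by
  rw [jorY, ← φ.commutes, ← MvPolynomial.algebraMap_eq]
  exact jor_map (φ : MvPolynomial (Fin n × Fin n) B →+* S) _ _

end GenericMatrix

namespace Cquot

variable {B : Type} [CommRing B] {half : B} {n : ℕ} {b : Matrix (Fin n) (Fin n) B}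
  {S : Type} [CommRing S]

lemma relIdeal_le_ker_iff (f : Caway B half n →+* S) :
    relIdeal B half n b ≤ RingHom.ker f ↔
      (Ymat B n).map (f.comp (algebraMap _ _)) ^ 2 = b.map (f.comp (algebraMap _ _)) := by
  have hmap : f.mapMatrix ((Ymat B n).map (algebraMap _ (Caway B half n)) ^ 2 -
      b.map (algebraMap _ _)) =
      (Ymat B n).map (f.comp (algebraMap _ _)) ^ 2 - b.map (f.comp (algebraMap _ _)) := by
    rw [map_sub, map_pow]
    simp only [RingHom.mapMatrix_apply, Matrix.map_map, RingHom.coe_comp]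
  rw [relIdeal, Ideal.span_le, Set.range_subset_iff, ← sub_eq_zero, ← hmap, ← Matrix.ext_iff]
  simp [Prod.forall]

def genMatrix (B : Type) [CommRing B] (half : B) (n : ℕ) (b : Matrix (Fin n) (Fin n) B) :
    Matrix (Fin n) (Fin n) (Cquot B half n b) :=
  (Ymat B n).map (algebraMap _ _)

lemma genMatrix_sq : genMatrix B half n b ^ 2 = b.map (algebraMap B _) :=
  (relIdeal_le_ker_iff (Ideal.Quotient.mk (relIdeal B half n b))).mp Ideal.mk_ker.ge

lemma isUnit_jor_genMatrix : IsUnit (jor (algebraMap B _ half) (genMatrix B half n b)) :=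
  (IsScalarTower.toAlgHom B (MvPolynomial (Fin n × Fin n) B) (Cquot B half n b)).map_jorY ▸
    (IsLocalization.Away.algebraMap_isUnit (jorY B half n)).map (Ideal.Quotient.mk _)

lemma algHom_ext [Algebra B S] {f g : Cquot B half n b →ₐ[B] S}
    (h : (genMatrix B half n b).map f = (genMatrix B half n b).map g) : f = g := by
  apply Ideal.Quotient.algHom_ext
  apply AlgHom.coe_ringHom_injective
  apply IsLocalization.ringHom_ext (Submonoid.powers (jorY B half n))
  apply MvPolynomial.ringHom_ext
  · intro c
    simp only [← MvPolynomial.algebraMap_eq, RingHom.comp_apply,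
      ← IsScalarTower.algebraMap_apply, RingHom.coe_coe, AlgHom.commutes]
  · intro ij
    simpa [genMatrix, Ymat] using congrFun (congrFun h ij.1) ij.2

section Lift

variable [Algebra B S] (z : Matrix (Fin n) (Fin n) S)

lemma isUnit_aeval_jorY (hjor : IsUnit (jor (algebraMap B S half) z)) :
    IsUnit (aeval (fun ij : Fin n × Fin n => z ij.1 ij.2) (jorY B half n)) := by
  rwa [AlgHom.map_jorY, Ymat_map_aeval]

/-- `C` represents the matrices `z` with `z ^ 2 = b` and `jor z` invertible. -/
def lift (hz : z ^ 2 = b.map (algebraMap B S)) (hjor : IsUnit (jor (algebraMap B S half) z)) :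
    Cquot B half n b →ₐ[B] S :=
  let ψ : Caway B half n →ₐ[B] S :=
    IsLocalization.Away.liftAlgHom _ (isUnit_aeval_jorY z hjor)
  have hψ : relIdeal B half n b ≤ RingHom.ker (ψ : Caway B half n →+* S) := by
    rw [relIdeal_le_ker_iff, AlgHom.comp_algebraMap, ← AlgHom.toRingHom_eq_coe, IsLocalization.Away.liftAlgHom_toRingHom,
      IsLocalization.Away.lift_comp]
    exact (Ymat_map_aeval (B := B) z).symm ▸ hz
  Ideal.Quotient.liftₐ _ ψ fun _ ha => hψ ha

variable (hz : z ^ 2 = b.map (algebraMap B S)) (hjor : IsUnit (jor (algebraMap B S half) z))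

lemma lift_algebraMap (p : MvPolynomial (Fin n × Fin n) B) :
    lift z hz hjor (algebraMap _ _ p) = aeval (fun ij : Fin n × Fin n => z ij.1 ij.2) p := by
  rw [IsScalarTower.algebraMap_apply _ (Caway B half n), Ideal.Quotient.algebraMap_eq]
  exact IsLocalization.Away.lift_eq _ (isUnit_aeval_jorY z hjor) p

lemma map_lift_genMatrix : (genMatrix B half n b).map (lift z hz hjor) = z := by
  rw [genMatrix, Matrix.map_map]
  ext i j
  simp [lift_algebraMap, Ymat]

end Lift

theorem nonempty_algEquiv_adjoinRoot (hhalf : half * 2 = 1) (hn : 0 < n) (lam : Bˣ) :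
    Nonempty (Cquot B half n ((lam : B) • 1) ≃ₐ[B]
      AdjoinRoot (Polynomial.X ^ 2 - Polynomial.C (lam : B))) := by
  set f : Polynomial B := Polynomial.X ^ 2 - Polynomial.C (lam : B)
  obtain ⟨t, ht, hyt⟩ := exists_eq_smul_one_of_isUnit_jor hn _ _
    (genMatrix B half n ((lam : B) • 1)) (genMatrix_sq.trans (Matrix.map_smul_one _ _))
    isUnit_jor_genMatrix
  have hr : AdjoinRoot.root f ^ 2 = algebraMap B (AdjoinRoot f) lam := by
    simpa [f, sub_eq_zero] using AdjoinRoot.eval₂_root f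
  have hz : (AdjoinRoot.root f • 1 : Matrix (Fin n) (Fin n) (AdjoinRoot f)) ^ 2 =
      ((lam : B) • 1 : Matrix (Fin n) (Fin n) B).map (algebraMap B _) := by
    rw [smul_pow, one_pow, hr, Matrix.map_smul_one]
  have hjor : IsUnit (jor (algebraMap B (AdjoinRoot f) half)
      (AdjoinRoot.root f • 1 : Matrix (Fin n) (Fin n) (AdjoinRoot f))) := by
    refine isUnit_jor_smul_one _ _ ?_
    rw [← map_ofNat (algebraMap B (AdjoinRoot f)), ← map_mul, hhalf, map_one, one_mul]
    exact (isUnit_pow_iff two_ne_zero).mp (hr ▸ lam.isUnit.map _)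
  let φ : Cquot B half n ((lam : B) • 1) →ₐ[B] AdjoinRoot f := lift _ hz hjor
  let ψ := AdjoinRoot.liftAlgHom f (Algebra.ofId B (Cquot B half n ((lam : B) • 1))) t
    (by simpa [f, sub_eq_zero] using ht)
  have hφt : φ t = AdjoinRoot.root f := by
    simpa [hyt] using congrFun (congrFun (map_lift_genMatrix _ hz hjor) ⟨0, hn⟩) ⟨0, hn⟩
  have hψr : ψ (AdjoinRoot.root f) = t := AdjoinRoot.liftAlgHom_root ..
  refine ⟨AlgEquiv.ofAlgHom φ ψ (AdjoinRoot.algHom_ext (by simp [hψr, hφt])) (algHom_ext ?_)⟩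
  rw [hyt, Matrix.map_smul_one, Matrix.map_smul_one, AlgHom.comp_apply, hφt, hψr,
    AlgHom.id_apply]

end Cquot

/-- If `B` is a field of characteristic `≠ 2` and `b` is an invertible scalar matrix,
then `C = B[y, jor(y)⁻¹]/(y² − b)` has dimension `2` over `B`. -/
theorem stmt1 (B : Type) [Field B] (h2 : ringChar B ≠ 2) (n : ℕ) (hn : 0 < n)
    (lam : Bˣ) (b : Matrix (Fin n) (Fin n) B)
    (hb : b = (lam : B) • (1 : Matrix (Fin n) (Fin n) B)) :
    Module.finrank B (Cquot B (2 : B)⁻¹ n b) = 2 := by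
  subst hb
  obtain ⟨e⟩ := Cquot.nonempty_algEquiv_adjoinRoot (inv_mul_cancel₀ (Ring.two_ne_zero h2)) hn lam
  exact e.toLinearEquiv.finrank_eq.trans
    (finrank_quotient_span_eq_natDegree.trans Polynomial.natDegree_X_pow_sub_C)
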